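/- In Uq[osp(1|2)], the element t_l^l = v_+^l q^{lH} (up to normalization, t_l^l = ([2l]!)^{-1/2}·(...)·v_+^l q^{lH}) is a highest weight vector of weight l/2 for the adjoint action: ad_H(t_l^l) = (l/2) t_l^l and ad_{v_+}(t_l^l) = 0, where l is an even natural number. -/
import Mathlib

section Aux

set_option linter.unusedSectionVars false

variable {A : Type} [Ring A] [Algebra ℂ A]

lemma aux_Hvpn (H vp : A) (hHvp : H * vp - vp * H = (1 / 2 : ℂ) • vp) :
    ∀ n : ℕ, H * vp ^ n - vp ^ n * H = ((n : ℂ) / 2) • vp ^ n := by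
  intro n
  induction n with
  | zero => simp
  | succ n ih =>
    have hHvp' : H * vp = vp * H + (1 / 2 : ℂ) • vp := by rw [← hHvp]; abel
    have ih' : H * vp ^ n = vp ^ n * H + ((n : ℂ) / 2) • vp ^ n := by rw [← ih]; abel
    have key : H * vp ^ (n + 1)
        = vp ^ (n + 1) * H + (((n : ℂ) / 2) + 1 / 2) • vp ^ (n + 1) := by
      calc H * vp ^ (n + 1) = (H * vp) * vp ^ n := by rw [pow_succ', ← mul_assoc]
        _ = vp * (H * vp ^ n) + (1 / 2 : ℂ) • vp ^ (n + 1) := by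
              rw [hHvp', add_mul, smul_mul_assoc, mul_assoc, ← pow_succ']
        _ = vp ^ (n + 1) * H + ((n : ℂ) / 2) • vp ^ (n + 1) + (1 / 2 : ℂ) • vp ^ (n + 1) := by
              rw [ih', mul_add, mul_smul_comm, ← pow_succ', ← mul_assoc, ← pow_succ']
        _ = _ := by rw [add_assoc, ← add_smul]
    rw [key]
    have hsc : ((n : ℂ) + 1) / 2 = (n : ℂ) / 2 + 1 / 2 := by ring
    push_cast
    rw [hsc]
    abel

lemma aux_HKn (H K : A) (hHK : H * K = K * H) :
    ∀ n : ℕ, H * K ^ n = K ^ n * H := by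
  intro n
  induction n with
  | zero => simp
  | succ n ih =>
    rw [pow_succ, ← mul_assoc, ih, mul_assoc, hHK, ← mul_assoc]

lemma aux_KnKinv (K Kinv : A) (hKK : K * Kinv = 1) (hKK' : Kinv * K = 1) :
    ∀ n : ℕ, K ^ n * Kinv = Kinv * K ^ n := by
  intro n
  cases n with
  | zero => simp
  | succ n =>
    have h1 : K ^ (n + 1) * Kinv = K ^ n := by rw [pow_succ, mul_assoc, hKK, mul_one]
    have h2 : Kinv * K ^ (n + 1) = K ^ n := by rw [pow_succ', ← mul_assoc, hKK', one_mul]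
    rw [h1, h2]

lemma aux_vpKinv (r : ℂ) (vp K Kinv : A)
    (hKvp : K * vp = r • (vp * K))
    (hKK : K * Kinv = 1) (hKK' : Kinv * K = 1) :
    vp * Kinv = r • (Kinv * vp) := by
  calc vp * Kinv = Kinv * (K * vp) * Kinv := by rw [← mul_assoc, hKK', one_mul]
    _ = Kinv * (r • (vp * K)) * Kinv := by rw [hKvp]
    _ = r • (Kinv * vp * (K * Kinv)) := by
          rw [mul_smul_comm, smul_mul_assoc, mul_assoc, mul_assoc, mul_assoc]
    _ = r • (Kinv * vp) := by rw [hKK, mul_one]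

lemma aux_vpnKinv (r : ℂ) (vp K Kinv : A)
    (hKvp : K * vp = r • (vp * K))
    (hKK : K * Kinv = 1) (hKK' : Kinv * K = 1) :
    ∀ n : ℕ, vp ^ n * Kinv = r ^ n • (Kinv * vp ^ n) := by
  have h := aux_vpKinv r vp K Kinv hKvp hKK hKK'
  intro n
  induction n with
  | zero => simp
  | succ n ih =>
    calc vp ^ (n + 1) * Kinv = vp ^ n * (vp * Kinv) := by rw [pow_succ, mul_assoc]
      _ = vp ^ n * (r • (Kinv * vp)) := by rw [h]
      _ = r • ((vp ^ n * Kinv) * vp) := by rw [mul_smul_comm, mul_assoc]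
      _ = r • ((r ^ n • (Kinv * vp ^ n)) * vp) := by rw [ih]
      _ = r ^ (n + 1) • (Kinv * vp ^ (n + 1)) := by
            rw [smul_mul_assoc, smul_smul, mul_assoc, ← pow_succ, ← pow_succ']

lemma aux_Knvp (r : ℂ) (vp K : A) (hKvp : K * vp = r • (vp * K)) :
    ∀ n : ℕ, K ^ n * vp = r ^ n • (vp * K ^ n) := by
  intro n
  induction n with
  | zero => simp
  | succ n ih =>
    calc K ^ (n + 1) * vp = K * (K ^ n * vp) := by rw [pow_succ', mul_assoc]
      _ = K * (r ^ n • (vp * K ^ n)) := by rw [ih]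
      _ = r ^ n • ((K * vp) * K ^ n) := by rw [mul_smul_comm, mul_assoc]
      _ = r ^ n • ((r • (vp * K)) * K ^ n) := by rw [hKvp]
      _ = r ^ (n + 1) • (vp * K ^ (n + 1)) := by
            rw [smul_mul_assoc, smul_smul, mul_assoc, ← pow_succ, ← pow_succ']

end Aux

/-- In `U_q[osp(1|2)]` (presented abstractly by generators
`H, v₊` and the invertible group-like element `K = q^H`, with `r = q^{1/2}`
so that `K v₊ = q^{1/2} v₊ K`), the element `t_l^l = v₊^l q^{lH} = v₊^l K^l`,
for `l` an even natural number, is a highest weight vector of weight `l/2`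
for the adjoint action:
`ad_H(v₊^l K^l) = H (v₊^l K^l) - (v₊^l K^l) H = (l/2) v₊^l K^l` and
`ad_{v₊}(v₊^l K^l) = v₊ (v₊^l K^l) K⁻¹ - q^{1/2} K⁻¹ (v₊^l K^l) v₊ = 0`
(the sign `(-1)^{|b|}` is `+1` since `b = v₊^l K^l` is even). -/
theorem highest_weight_vector_adjoint {A : Type} [Ring A] [Algebra ℂ A]
    (r : ℂ) (H vp K Kinv : A) (l : ℕ) (hleven : Even l)
    (hHvp : H * vp - vp * H = (1 / 2 : ℂ) • vp)
    (hKvp : K * vp = r • (vp * K))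
    (hKK : K * Kinv = 1) (hKK' : Kinv * K = 1)
    (hHK : H * K = K * H) (hHKinv : H * Kinv = Kinv * H) :
    (H * (vp ^ l * K ^ l) - (vp ^ l * K ^ l) * H
        = ((l : ℂ) / 2) • (vp ^ l * K ^ l)) ∧
    (vp * (vp ^ l * K ^ l) * Kinv - r • (Kinv * (vp ^ l * K ^ l) * vp) = 0) := by
  constructor
  · have h1 : H * vp ^ l = vp ^ l * H + ((l : ℂ) / 2) • vp ^ l := by
      rw [← aux_Hvpn H vp hHvp l]; abel
    have h2 := aux_HKn H K hHK l
    calc H * (vp ^ l * K ^ l) - (vp ^ l * K ^ l) * H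
        = (H * vp ^ l) * K ^ l - vp ^ l * (K ^ l * H) := by
          rw [← mul_assoc, mul_assoc (vp ^ l)]
      _ = (vp ^ l * H + ((l : ℂ) / 2) • vp ^ l) * K ^ l - vp ^ l * (H * K ^ l) := by
          rw [h1, h2]
      _ = vp ^ l * H * K ^ l + ((l : ℂ) / 2) • (vp ^ l * K ^ l) - vp ^ l * H * K ^ l := by
          rw [add_mul, smul_mul_assoc, ← mul_assoc]
      _ = ((l : ℂ) / 2) • (vp ^ l * K ^ l) := by abel
  · have hL : vp * (vp ^ l * K ^ l) * Kinv = r ^ (l + 1) • (Kinv * vp ^ (l + 1) * K ^ l) := by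
      calc vp * (vp ^ l * K ^ l) * Kinv
          = vp ^ (l + 1) * (K ^ l * Kinv) := by rw [← mul_assoc vp, ← pow_succ', mul_assoc]
        _ = (vp ^ (l + 1) * Kinv) * K ^ l := by
              rw [aux_KnKinv K Kinv hKK hKK' l, ← mul_assoc]
        _ = (r ^ (l + 1) • (Kinv * vp ^ (l + 1))) * K ^ l := by
              rw [aux_vpnKinv r vp K Kinv hKvp hKK hKK' (l + 1)]
        _ = r ^ (l + 1) • (Kinv * vp ^ (l + 1) * K ^ l) := by rw [smul_mul_assoc]
    have hR : Kinv * (vp ^ l * K ^ l) * vp = r ^ l • (Kinv * vp ^ (l + 1) * K ^ l) := by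
      calc Kinv * (vp ^ l * K ^ l) * vp
          = Kinv * vp ^ l * (K ^ l * vp) := by
            rw [← mul_assoc, mul_assoc (Kinv * vp ^ l)]
        _ = Kinv * vp ^ l * (r ^ l • (vp * K ^ l)) := by rw [aux_Knvp r vp K hKvp l]
        _ = r ^ l • (Kinv * vp ^ l * (vp * K ^ l)) := by rw [mul_smul_comm]
        _ = r ^ l • (Kinv * vp ^ (l + 1) * K ^ l) := by
              rw [← mul_assoc, mul_assoc Kinv, ← pow_succ]
    rw [hL, hR, smul_smul, ← pow_succ', sub_self]
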